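/- arXiv:1703.02819 — 7 statements merged into one kernel-verified Lean document; each statement's English description precedes it below -/
import Mathlib

section
/- A complete lattice L is isomorphic to the concept lattice B(G,M,I) of a formal context (G,M,I) if and only if there exist mappings γ : G → L and μ : M → L such that γ(G) is supremum-dense in L, μ(M) is infimum-dense in L, and gIm ⟺ γ(g) ≤ μ(m) for all g ∈ G and all m ∈ M. -/
def intentOf {G M : Type*} (I : G → M → Prop) (A : Set G) : Set M :=
  {m | ∀ g ∈ A, I g m}

def extentOf {G M : Type*} (I : G → M → Prop) (B : Set M) : Set G :=
  {g | ∀ m ∈ B, I g m}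

structure FormalConcept {G M : Type*} (I : G → M → Prop) where
  extent : Set G
  intent : Set M
  intentOf_extent : intentOf I extent = intent
  extentOf_intent : extentOf I intent = extent

instance FormalConcept.instPartialOrder {G M : Type*} (I : G → M → Prop) :
    PartialOrder (FormalConcept I) where
  le c d := c.extent ⊆ d.extent
  le_refl c := subset_rfl
  le_trans a b c hab hbc := Set.Subset.trans hab hbc
  le_antisymm a b hab hba := by
    obtain ⟨ae, ai, ha1, ha2⟩ := a
    obtain ⟨be, bi, hb1, hb2⟩ := b
    have he : ae = be := Set.Subset.antisymm hab hba
    subst he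
    have hi : ai = bi := by rw [← ha1, ← hb1]
    subst hi
    rfl

namespace FCAAux

variable {G M : Type*} {I : G → M → Prop}

lemma le_def (c d : FormalConcept I) : c ≤ d ↔ c.extent ⊆ d.extent := Iff.rfl

lemma ext_extent {c d : FormalConcept I} (h : c.extent = d.extent) : c = d :=
  le_antisymm ((le_def c d).2 h.le) ((le_def d c).2 h.ge)

lemma intentOf_anti {A B : Set G} (h : A ⊆ B) : intentOf I B ⊆ intentOf I A :=
  fun m hm g hg => hm g (h hg)

lemma extentOf_anti {A B : Set M} (h : A ⊆ B) : extentOf I B ⊆ extentOf I A :=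
  fun g hg m hm => hg m (h hm)

lemma subset_extentOf_intentOf (A : Set G) : A ⊆ extentOf I (intentOf I A) :=
  fun g hg m hm => hm g hg

lemma subset_intentOf_extentOf (B : Set M) : B ⊆ intentOf I (extentOf I B) :=
  fun m hm g hg => hg m hm

lemma intentOf_extentOf_intentOf (A : Set G) :
    intentOf I (extentOf I (intentOf I A)) = intentOf I A :=
  Set.Subset.antisymm (intentOf_anti (subset_extentOf_intentOf A))
    (subset_intentOf_extentOf _)

lemma extentOf_intentOf_extentOf (B : Set M) :
    extentOf I (intentOf I (extentOf I B)) = extentOf I B :=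
  Set.Subset.antisymm (extentOf_anti (subset_intentOf_extentOf B))
    (subset_extentOf_intentOf _)

def objectConcept (I : G → M → Prop) (g : G) : FormalConcept I where
  extent := extentOf I (intentOf I {g})
  intent := intentOf I {g}
  intentOf_extent := intentOf_extentOf_intentOf _
  extentOf_intent := rfl

def attrConcept (I : G → M → Prop) (m : M) : FormalConcept I where
  extent := extentOf I {m}
  intent := intentOf I (extentOf I {m})
  intentOf_extent := rfl
  extentOf_intent := extentOf_intentOf_extentOf _

lemma objectConcept_le_iff (g : G) (c : FormalConcept I) :
    objectConcept I g ≤ c ↔ g ∈ c.extent := by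
  constructor
  · intro h
    exact h (subset_extentOf_intentOf {g} rfl)
  · intro hg
    have h1 : c.intent ⊆ intentOf I {g} := by
      intro m hm
      intro g' hg'
      cases hg'
      rw [← c.intentOf_extent] at hm
      exact hm g hg
    have := extentOf_anti (I := I) h1
    rw [c.extentOf_intent] at this
    exact this

lemma le_attrConcept_iff (m : M) (c : FormalConcept I) :
    c ≤ attrConcept I m ↔ m ∈ c.intent := by
  constructor
  · intro h
    rw [← c.intentOf_extent]
    intro g hg
    exact h hg m rfl
  · intro hm
    intro g hg m' hm'
    cases hm'
    rw [← c.extentOf_intent] at hg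
    exact hg m hm

end FCAAux

open FCAAux in
/-- The Basic Theorem of FCA (second part): a complete lattice `L` is isomorphic to the
concept lattice `B(G,M,I)` iff there are maps `γ : G → L` and `μ : M → L` such that `γ(G)` is
supremum-dense in `L`, `μ(M)` is infimum-dense in `L`, and `I g m ↔ γ g ≤ μ m`. -/
theorem complete_lattice_iso_concept_lattice_iff {L G M : Type*} [CompleteLattice L]
    (I : G → M → Prop) :
    Nonempty (L ≃o FormalConcept I) ↔
      ∃ (γ : G → L) (μ : M → L),
        (∀ v : L, v = sSup {x | x ∈ Set.range γ ∧ x ≤ v}) ∧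
        (∀ v : L, v = sInf {x | x ∈ Set.range μ ∧ v ≤ x}) ∧
        (∀ (g : G) (m : M), I g m ↔ γ g ≤ μ m) := by
  constructor
  · rintro ⟨e⟩
    refine ⟨fun g => e.symm (objectConcept I g), fun m => e.symm (attrConcept I m), ?_, ?_, ?_⟩
    · intro v
      apply le_antisymm
      · -- v ≤ sSup
        have hv : e v ≤ e (sSup {x | x ∈ Set.range (fun g => e.symm (objectConcept I g)) ∧ x ≤ v}) := by
          intro g hg
          have hle : (fun g => e.symm (objectConcept I g)) g ≤ v := by
            rw [← e.symm_apply_apply v]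
            exact e.symm.monotone ((objectConcept_le_iff g (e v)).2 hg)
          have h2 : e.symm (objectConcept I g) ≤
              sSup {x | x ∈ Set.range (fun g => e.symm (objectConcept I g)) ∧ x ≤ v} :=
            le_sSup ⟨⟨g, rfl⟩, hle⟩
          have h3 : objectConcept I g ≤
              e (sSup {x | x ∈ Set.range (fun g => e.symm (objectConcept I g)) ∧ x ≤ v}) := by
            have := e.monotone h2
            rwa [e.apply_symm_apply] at this
          exact (objectConcept_le_iff g _).1 h3
        have := e.symm.monotone hv
        rwa [e.symm_apply_apply, e.symm_apply_apply] at this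
      · exact sSup_le fun x hx => hx.2
    · intro v
      apply le_antisymm
      · exact le_sInf fun x hx => hx.2
      · set T := {x | x ∈ Set.range (fun m => e.symm (attrConcept I m)) ∧ v ≤ x} with hT
        have hv : e (sInf T) ≤ e v := by
          intro g hg
          rw [← (e v).extentOf_intent]
          intro m hm
          have hvm : v ≤ e.symm (attrConcept I m) := by
            rw [← e.symm_apply_apply v]
            exact e.symm.monotone ((le_attrConcept_iff m (e v)).2 hm)
          have h2 : sInf T ≤ e.symm (attrConcept I m) := sInf_le ⟨⟨m, rfl⟩, hvm⟩
          have h3 : e (sInf T) ≤ attrConcept I m := by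
            have := e.monotone h2
            rwa [e.apply_symm_apply] at this
          exact h3 hg m rfl
        have := e.symm.monotone hv
        rwa [e.symm_apply_apply, e.symm_apply_apply] at this
    · intro g m
      constructor
      · intro h
        apply e.symm.monotone
        rw [le_def]
        show extentOf I (intentOf I {g}) ⊆ extentOf I {m}
        apply extentOf_anti
        intro m' hm'
        cases hm'
        intro g' hg'
        cases hg'
        exact h
      · intro h
        have h2 : objectConcept I g ≤ attrConcept I m := by
          have := e.monotone h
          rwa [e.apply_symm_apply, e.apply_symm_apply] at this
        exact h2 (subset_extentOf_intentOf {g} rfl) m rfl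
  · rintro ⟨γ, μ, hγ, hμ, hI⟩
    have pf1 : ∀ v : L, intentOf I {g | γ g ≤ v} = {m | v ≤ μ m} := by
      intro v
      ext m
      constructor
      · intro hm
        show v ≤ μ m
        calc v = sSup {x | x ∈ Set.range γ ∧ x ≤ v} := hγ v
        _ ≤ μ m := sSup_le (by rintro x ⟨⟨g, rfl⟩, hx⟩; exact (hI g m).1 (hm g hx))
      · intro hm g hg
        exact (hI g m).2 (le_trans hg hm)
    have pf2 : ∀ v : L, extentOf I {m | v ≤ μ m} = {g | γ g ≤ v} := by
      intro v
      ext g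
      constructor
      · intro hg
        show γ g ≤ v
        calc γ g ≤ sInf {x | x ∈ Set.range μ ∧ v ≤ x} :=
              le_sInf (by rintro x ⟨⟨m, rfl⟩, hx⟩; exact (hI g m).1 (hg m hx))
        _ = v := (hμ v).symm
      · intro hg m hm
        exact (hI g m).2 (le_trans hg hm)
    refine ⟨⟨⟨fun v => ⟨{g | γ g ≤ v}, {m | v ≤ μ m}, pf1 v, pf2 v⟩,
      fun c => sSup (γ '' c.extent), ?_, ?_⟩, ?_⟩⟩
    · -- left_inv
      intro v
      show sSup (γ '' {g | γ g ≤ v}) = v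
      have : γ '' {g | γ g ≤ v} = {x | x ∈ Set.range γ ∧ x ≤ v} := by
        ext x
        constructor
        · rintro ⟨g, hg, rfl⟩; exact ⟨⟨g, rfl⟩, hg⟩
        · rintro ⟨⟨g, rfl⟩, hx⟩; exact ⟨g, hx, rfl⟩
      rw [this, ← hγ v]
    · -- right_inv
      intro c
      apply ext_extent
      show {g | γ g ≤ sSup (γ '' c.extent)} = c.extent
      apply Set.Subset.antisymm
      · intro g hg
        rw [← c.extentOf_intent]
        intro m hm
        apply (hI g m).2
        refine le_trans hg (sSup_le ?_)
        rintro x ⟨h, hh, rfl⟩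
        apply (hI h m).1
        rw [← c.intentOf_extent] at hm
        exact hm h hh
      · intro g hg
        exact le_sSup ⟨g, hg, rfl⟩
    · -- map_rel_iff'
      intro v w
      constructor
      · intro h
        calc v = sSup {x | x ∈ Set.range γ ∧ x ≤ v} := hγ v
        _ ≤ w := sSup_le (by
            rintro x ⟨⟨g, rfl⟩, hx⟩
            exact h hx)
      · intro h g hg
        exact le_trans hg h
end

section
/- Every complete lattice L is isomorphic (as an ordered set) to the concept lattice B(L,L,≤) of the formal context (L,L,≤) whose objects and attributes are the elements of L and whose incidence relation is the lattice order ≤. -/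
/-- Every complete lattice `L` is isomorphic, as an ordered set, to the concept lattice
`B(L, L, ≤)` of the formal context whose objects and attributes are the elements of `L`
and whose incidence relation is the lattice order `≤`. -/
theorem complete_lattice_iso_concept_lattice_of_le {L : Type*} [CompleteLattice L] :
    Nonempty (L ≃o FormalConcept (fun a b : L => a ≤ b)) := by
  set I : L → L → Prop := fun a b => a ≤ b with hI
  refine ⟨{
    toFun := fun x => ⟨Set.Iic x, Set.Ici x, ?_, ?_⟩
    invFun := fun c => sSup c.extent
    left_inv := ?_
    right_inv := ?_
    map_rel_iff' := ?_ }⟩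
  · ext m
    simp only [intentOf, Set.mem_setOf_eq, Set.mem_Iic, Set.mem_Ici, hI]
    exact ⟨fun h => h x le_rfl, fun h g hg => hg.trans h⟩
  · ext g
    simp only [extentOf, Set.mem_setOf_eq, Set.mem_Iic, Set.mem_Ici, hI]
    exact ⟨fun h => h x le_rfl, fun h m hm => h.trans hm⟩
  · intro x
    simp
  · rintro ⟨e, i, h1, h2⟩
    have hmem : sSup e ∈ e := by
      have : sSup e ∈ extentOf I i := by
        intro m hm
        have hm' : m ∈ intentOf I e := h1 ▸ hm
        exact sSup_le fun g hg => hm' g hg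
      exact h2 ▸ this
    have he : e = Set.Iic (sSup e) := by
      ext g
      refine ⟨fun hg => le_sSup hg, fun hg => ?_⟩
      have : g ∈ extentOf I i := by
        intro m hm
        have hm' : m ∈ intentOf I e := h1 ▸ hm
        exact le_trans hg (hm' _ hmem)
      exact h2 ▸ this
    have hi : i = Set.Ici (sSup e) := by
      rw [← h1]
      ext m
      simp only [intentOf, Set.mem_setOf_eq, Set.mem_Ici, hI]
      exact ⟨fun h => h _ hmem, fun h g hg => (le_sSup hg).trans h⟩
    have : e = Set.Iic (sSup e) := he
    simp only [FormalConcept.mk.injEq]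
    exact ⟨this.symm, hi.symm⟩
  · intro a b
    show Set.Iic a ⊆ Set.Iic b ↔ a ≤ b
    exact ⟨fun h => h le_rfl, fun h x hx => hx.trans h⟩
end

section
/- Let (G,M,I) be a finite formal context. The Duquenne–Guigues base {P → P″ | P is a pseudo-intent of (G,M,I)} is an implication base of minimum cardinality: (i) every implication A → B that holds in (G,M,I) follows semantically from the Duquenne–Guigues base, and (ii) every set L of implications over M such that all implications of L hold in (G,M,I) and every implication holding in (G,M,I) follows semantically from L satisfies |L| ≥ (number of pseudo-intents of (G,M,I)). -/
/-- The closure `B ↦ B″` on attribute sets. -/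
def attrClosure {G M : Type*} (I : G → M → Prop) (B : Set M) : Set M :=
  intentOf I (extentOf I B)

/-- The implication `A → B` holds in the context `(G,M,I)` if `A′ ⊆ B′`. -/
def ImpHolds {G M : Type*} (I : G → M → Prop) (A B : Set M) : Prop :=
  extentOf I A ⊆ extentOf I B

/-- A subset `T ⊆ M` respects an implication `A → B` if `A ⊆ T` implies `B ⊆ T`. -/
def Respects {M : Type*} (T : Set M) (p : Set M × Set M) : Prop :=
  p.1 ⊆ T → p.2 ⊆ T

/-- An implication follows semantically from a set `L` of implications if every `T ⊆ M`
respecting all implications of `L` also respects it. -/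
def FollowsFrom {M : Type*} (L : Set (Set M × Set M)) (p : Set M × Set M) : Prop :=
  ∀ T : Set M, (∀ q ∈ L, Respects T q) → Respects T p

/-- `P ⊆ M` is a pseudo-intent if `P ≠ P″` and for every pseudo-intent `Q ⊊ P` one has
`Q″ ⊆ P` (a well-founded recursive definition on finite subsets of `M`). -/
def IsPseudoIntent {G M : Type*} (I : G → M → Prop) (P : Finset M) : Prop :=
  (↑P : Set M) ≠ attrClosure I ↑P ∧
    ∀ Q : Finset M, Q ⊂ P → IsPseudoIntent I Q → attrClosure I ↑Q ⊆ (↑P : Set M)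
termination_by P.card
decreasing_by exact Finset.card_lt_card (by assumption)


section Aux

variable {G M : Type*} (I : G → M → Prop)

theorem isPseudoIntent_iff (P : Finset M) :
    IsPseudoIntent I P ↔ ((↑P : Set M) ≠ attrClosure I ↑P ∧
    ∀ Q : Finset M, Q ⊂ P → IsPseudoIntent I Q → attrClosure I ↑Q ⊆ (↑P : Set M)) := by
  rw [IsPseudoIntent]

theorem subset_attrClosure (B : Set M) : B ⊆ attrClosure I B :=
  fun _m hm _g hg => hg _ hm

theorem extentOf_anti {A B : Set M} (h : A ⊆ B) : extentOf I B ⊆ extentOf I A :=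
  fun _g hg m hm => hg m (h hm)

theorem impHolds_iff (A B : Set M) : ImpHolds I A B ↔ B ⊆ attrClosure I A := by
  constructor
  · intro h m hm g hg
    exact h hg m hm
  · intro h g hg m hm
    exact h hm g hg

theorem attrClosure_mono {A B : Set M} (h : A ⊆ B) :
    attrClosure I A ⊆ attrClosure I B :=
  fun _m hm g hg => hm g (extentOf_anti I h hg)

theorem impHolds_closure (A : Set M) : ImpHolds I A (attrClosure I A) :=
  (impHolds_iff I A _).mpr (subset_refl _)

end Aux

/-- The Duquenne–Guigues base `{P → P″ | P pseudo-intent}` is a minimum-cardinality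
implication base: (i) every implication holding in `(G,M,I)` follows semantically from it;
(ii) every sound and complete set `L` of implications has at least as many members as there
are pseudo-intents. -/
theorem duquenne_guigues_base_minimum {G M : Type*} [Fintype G] [Fintype M]
    (I : G → M → Prop) :
    (∀ A B : Set M, ImpHolds I A B →
      FollowsFrom {p | ∃ P : Finset M, IsPseudoIntent I P ∧ p = (↑P, attrClosure I ↑P)}
        (A, B)) ∧
    (∀ L : Set (Set M × Set M),
      (∀ q ∈ L, ImpHolds I q.1 q.2) →
      (∀ A B : Set M, ImpHolds I A B → FollowsFrom L (A, B)) →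
      Nat.card {P : Finset M // IsPseudoIntent I P} ≤ L.ncard) := by
  set base : Set (Set M × Set M) :=
    {p | ∃ P : Finset M, IsPseudoIntent I P ∧ p = (↑P, attrClosure I ↑P)} with hbase
  -- Part (i): completeness of the Duquenne–Guigues base.
  have compl : ∀ A B : Set M, ImpHolds I A B → FollowsFrom base (A, B) := by
    intro A B hAB T hT hA
    -- T is closed
    have hTclosed : attrClosure I T ⊆ T := by
      set F := (Set.toFinite T).toFinset with hFdef
      have hFT : (↑F : Set M) = T := Set.Finite.coe_toFinset _
      by_cases hP : IsPseudoIntent I F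
      · have := hT (↑F, attrClosure I ↑F) ⟨F, hP, rfl⟩ (by rw [hFT])
        rwa [hFT] at this
      · rw [isPseudoIntent_iff] at hP
        push_neg at hP
        by_cases heq : (↑F : Set M) = attrClosure I ↑F
        · rw [hFT] at heq
          rw [← heq]
        · obtain ⟨Q, hQsub, hQp, hQn⟩ := hP heq
          have hQT : (↑Q : Set M) ⊆ T := by
            rw [← hFT]; exact_mod_cast hQsub.subset
          have := hT (↑Q, attrClosure I ↑Q) ⟨Q, hQp, rfl⟩ hQT
          rw [← hFT] at this
          exact absurd this hQn
    have hBA : B ⊆ attrClosure I A := (impHolds_iff I A B).mp hAB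
    exact hBA.trans ((attrClosure_mono I hA).trans hTclosed)
  refine ⟨compl, ?_⟩
  intro L hsound hcomplete
  -- For each pseudo-intent there is an implication of L it does not respect.
  have exists_imp : ∀ P : Finset M, IsPseudoIntent I P →
      ∃ q ∈ L, q.1 ⊆ (↑P : Set M) ∧ ¬ q.2 ⊆ (↑P : Set M) := by
    intro P hP
    by_contra h
    push_neg at h
    have hresp : ∀ q ∈ L, Respects (↑P : Set M) q :=
      fun q hq h1 => h q hq h1
    have := hcomplete ↑P (attrClosure I ↑P) (impHolds_closure I ↑P) ↑P hresp
      (subset_refl _) -- : attrClosure I ↑P ⊆ ↑P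
    have heq : (↑P : Set M) = attrClosure I ↑P :=
      le_antisymm (subset_attrClosure I ↑P) this
    exact ((isPseudoIntent_iff I P).mp hP).1 heq
  -- Injectivity key lemma
  have key : ∀ (P Q : Finset M), IsPseudoIntent I P → IsPseudoIntent I Q → P ≠ Q →
      ∀ A B : Set M, ImpHolds I A B → A ⊆ ↑P → A ⊆ ↑Q →
      ¬ B ⊆ (↑P : Set M) → ¬ B ⊆ (↑Q : Set M) → False := by
    intro P Q hP hQ hPQ A B hAB hAP hAQ hBP hBQ
    have hBA : B ⊆ attrClosure I A := (impHolds_iff I A B).mp hAB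
    set pP : Set M × Set M := (↑P, attrClosure I ↑P) with hpP
    set pQ : Set M × Set M := (↑Q, attrClosure I ↑Q) with hpQ
    set L' : Set (Set M × Set M) := base \ {pP, pQ} with hL'
    set Fam : Set (Set M) := {S | A ⊆ S ∧ ∀ q ∈ L', Respects S q} with hFam
    set T : Set M := ⋂₀ Fam with hT
    have hAT : A ⊆ T := Set.subset_sInter (fun S hS => hS.1)
    -- a pseudo-intent R with premise not excluded: its closure lands in P
    have hPFam : (↑P : Set M) ∈ Fam := by
      refine ⟨hAP, ?_⟩
      rintro q ⟨⟨R, hR, rfl⟩, hqn⟩ h1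
      have hRP : R ⊆ P := by exact_mod_cast h1
      rcases eq_or_ne R P with rfl | hne
      · exact absurd (show ((↑R : Set M), attrClosure I (↑R : Set M)) ∈ ({pP, pQ} : Set (Set M × Set M)) by rw [hpP]; exact Set.mem_insert _ _) hqn
      · exact ((isPseudoIntent_iff I P).mp hP).2 R (ssubset_of_subset_of_ne hRP hne) hR
    have hQFam : (↑Q : Set M) ∈ Fam := by
      refine ⟨hAQ, ?_⟩
      rintro q ⟨⟨R, hR, rfl⟩, hqn⟩ h1
      have hRQ : R ⊆ Q := by exact_mod_cast h1
      rcases eq_or_ne R Q with rfl | hne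
      · exact absurd (show ((↑R : Set M), attrClosure I (↑R : Set M)) ∈ ({pP, pQ} : Set (Set M × Set M)) by rw [hpQ]; exact Set.mem_insert_of_mem _ rfl) hqn
      · exact ((isPseudoIntent_iff I Q).mp hQ).2 R (ssubset_of_subset_of_ne hRQ hne) hR
    have hTP : T ⊆ ↑P := Set.sInter_subset_of_mem hPFam
    have hTQ : T ⊆ ↑Q := Set.sInter_subset_of_mem hQFam
    by_cases hPT : (↑P : Set M) ⊆ T
    · -- P ⊆ T ⊆ Q, so P ⊊ Q and cl(P) ⊆ Q, but B ⊆ cl(A) ⊆ cl(P) ⊆ Q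
      have hPQ' : P ⊂ Q := by
        refine ssubset_of_subset_of_ne ?_ hPQ
        exact_mod_cast hPT.trans hTQ
      have h1 : attrClosure I ↑P ⊆ (↑Q : Set M) :=
        ((isPseudoIntent_iff I Q).mp hQ).2 P hPQ' hP
      exact hBQ (hBA.trans ((attrClosure_mono I hAP).trans h1))
    · by_cases hQT : (↑Q : Set M) ⊆ T
      · have hQP' : Q ⊂ P := by
          refine ssubset_of_subset_of_ne ?_ (Ne.symm hPQ)
          exact_mod_cast hQT.trans hTP
        have h1 : attrClosure I ↑Q ⊆ (↑P : Set M) :=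
          ((isPseudoIntent_iff I P).mp hP).2 Q hQP' hQ
        exact hBP (hBA.trans ((attrClosure_mono I hAQ).trans h1))
      · -- T respects the whole base, hence cl(A) ⊆ T ⊆ P, contradiction
        have hTbase : ∀ q ∈ base, Respects T q := by
          intro q hq
          by_cases hq' : q ∈ L'
          · intro h1
            refine Set.subset_sInter (fun S hS => ?_)
            exact hS.2 q hq' (h1.trans (Set.sInter_subset_of_mem hS))
          · have : q ∈ ({pP, pQ} : Set (Set M × Set M)) := by
              by_contra hc
              exact hq' ⟨hq, hc⟩
            rcases this with h | h
            · intro h1; exact absurd (by rw [h] at h1; exact h1) hPT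
            · intro h1; exact absurd (by rw [h] at h1; exact h1) hQT
        have hclT : attrClosure I A ⊆ T :=
          compl A (attrClosure I A) (impHolds_closure I A) T hTbase hAT
        exact hBP (hBA.trans (hclT.trans hTP))
  -- counting
  have hchoice := fun P : {P : Finset M // IsPseudoIntent I P} => exists_imp P.1 P.2
  choose q hqL hq1 hq2 using hchoice
  have hLfin : Finite ↥L := Set.Finite.to_subtype (Set.toFinite L)
  have hinj : Function.Injective (fun P : {P : Finset M // IsPseudoIntent I P} =>
      (⟨q P, hqL P⟩ : ↥L)) := by
    intro P1 P2 h
    have hqq : q P1 = q P2 := congrArg Subtype.val h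
    by_contra hne
    have hne' : P1.1 ≠ P2.1 := fun hc => hne (Subtype.ext hc)
    exact key P1.1 P2.1 P1.2 P2.2 hne' (q P1).1 (q P1).2
      (hsound (q P1) (hqL P1)) (hq1 P1) (hqq ▸ hq1 P2) (hq2 P1) (hqq ▸ hq2 P2)
  have := Nat.card_le_card_of_injective _ hinj
  rwa [Nat.card_coe_set_eq] at this
end

section
/- Let (G,M,W,f) be a complete many-valued context given by a value function f : G × M → W, and define the formal context K_N := (P₂(G), M, I_N), where P₂(G) is the set of all pairs {g,h} of distinct objects from G and {g,h} I_N m ⟺ f(g,m) = f(h,m). Then a set Y ⊆ M is functionally dependent on a set X ⊆ M in (G,M,W,f) if and only if the implication X → Y holds in the context K_N. -/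
/-- `Y` is functionally dependent on `X` in the complete many-valued context `(G,M,W,f)`. -/
def FunDep {G M W : Type*} (f : G → M → W) (X Y : Set M) : Prop :=
  ∀ g h : G, (∀ m ∈ X, f g m = f h m) → ∀ n ∈ Y, f g n = f h n

/-- Reduction of functional dependencies to implications: `Y` is functionally dependent on
`X` in the many-valued context `(G,M,W,f)` iff the implication `X → Y` holds in the context
`K_N = (P₂(G), M, I_N)` whose objects are the pairs of distinct objects of `G` and where
`{g,h} I_N m ⟺ f g m = f h m`. -/
theorem funDep_iff_implication_in_pair_context {G M W : Type*} (f : G → M → W)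
    (X Y : Set M) :
    FunDep f X Y ↔
      ImpHolds (fun (p : {p : G × G // p.1 ≠ p.2}) (m : M) => f p.val.1 m = f p.val.2 m)
        X Y := by
  constructor
  · intro h p hp n hn
    exact h p.val.1 p.val.2 hp n hn
  · intro h g g' hX n hn
    by_cases hgg : g = g'
    · rw [hgg]
    · exact h (a := ⟨(g, g'), hgg⟩) hX n hn
end

section
/- Let (G,M,I) be a finite formal context and (g,m) ∈ I, and consider the OA-bicluster (m′, g′) with density ρ(m′,g′) = |I ∩ (m′ × g′)| / (|m′| · |g′|). Then: (1) 0 ≤ ρ(m′,g′) ≤ 1; (2) the pair (m′, g′) is a formal concept of (G,M,I) if and only if ρ(m′,g′) = 1; (3) the object concept (g″, g′) and the attribute concept (m′, m″) are formal concepts and (g″, g′) ≤ (m′, m″) in the concept order, i.e., g″ ⊆ m′. -/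
/-- The density of the OA-bicluster `(m′, g′)`:
`ρ(m′,g′) = |I ∩ (m′ × g′)| / (|m′| · |g′|)`. -/
noncomputable def oaDensity {G M : Type*} (I : G → M → Prop) (g : G) (m : M) : ℝ :=
  (Set.ncard {p : G × M |
      I p.1 p.2 ∧ p.1 ∈ extentOf I {m} ∧ p.2 ∈ intentOf I {g}} : ℝ) /
    (((extentOf I {m}).ncard : ℝ) * ((intentOf I {g}).ncard : ℝ))

lemma myncard_prod {A B : Type*} (s : Set A) (t : Set B) :
    (s ×ˢ t).ncard = s.ncard * t.ncard := by
  rw [← Nat.card_coe_set_eq, ← Nat.card_coe_set_eq s, ← Nat.card_coe_set_eq t,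
    Nat.card_congr (Equiv.Set.prod s t), Nat.card_prod]

lemma int_ext_int {G M : Type*} (I : G → M → Prop) (A : Set G) :
    intentOf I (extentOf I (intentOf I A)) = intentOf I A := by
  apply Set.Subset.antisymm
  · intro b hb a ha
    exact hb a (fun b' hb' => hb' a ha)
  · intro b hb a ha
    exact ha b hb

lemma ext_int_ext {G M : Type*} (I : G → M → Prop) (B : Set M) :
    extentOf I (intentOf I (extentOf I B)) = extentOf I B := by
  apply Set.Subset.antisymm
  · intro a ha b hb
    exact ha b (fun a' ha' => ha' b hb)
  · intro a ha b hb
    exact hb a ha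

/-- Basic properties of OA-biclusters: for `(g,m) ∈ I`,
(1) `0 ≤ ρ(m′,g′) ≤ 1`;
(2) `(m′, g′)` is a formal concept iff `ρ(m′,g′) = 1`;
(3) the object concept `(g″, g′)` and the attribute concept `(m′, m″)` are formal concepts
and `(g″, g′) ≤ (m′, m″)`, i.e. `g″ ⊆ m′`. -/
theorem oa_bicluster_properties {G M : Type*} [Fintype G] [Fintype M]
    (I : G → M → Prop) (g : G) (m : M) (hgm : I g m) :
    (0 ≤ oaDensity I g m ∧ oaDensity I g m ≤ 1) ∧
    ((∃ c : FormalConcept I, c.extent = extentOf I {m} ∧ c.intent = intentOf I {g}) ↔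
      oaDensity I g m = 1) ∧
    (∃ c d : FormalConcept I,
      c.extent = extentOf I (intentOf I {g}) ∧ c.intent = intentOf I {g} ∧
      d.extent = extentOf I {m} ∧ d.intent = intentOf I (extentOf I {m}) ∧
      c.extent ⊆ d.extent) := by
  classical
  set E := extentOf I {m} with hE
  set B := intentOf I {g} with hB
  have hgE : g ∈ E := by simp [hE, extentOf, hgm]
  have hmB : m ∈ B := by simp [hB, intentOf, hgm]
  set S : Set (G × M) := {p : G × M | I p.1 p.2 ∧ p.1 ∈ E ∧ p.2 ∈ B} with hS
  have hSsub : S ⊆ E ×ˢ B := fun p hp => ⟨hp.2.1, hp.2.2⟩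
  have hcardle : S.ncard ≤ E.ncard * B.ncard := by
    rw [← myncard_prod]
    exact Set.ncard_le_ncard hSsub (Set.toFinite _)
  have hEpos : 0 < E.ncard := (Set.ncard_pos (Set.toFinite _)).2 ⟨g, hgE⟩
  have hBpos : 0 < B.ncard := (Set.ncard_pos (Set.toFinite _)).2 ⟨m, hmB⟩
  have hden : (0:ℝ) < (E.ncard : ℝ) * (B.ncard : ℝ) :=
    mul_pos (by exact_mod_cast hEpos) (by exact_mod_cast hBpos)
  have hdensity : oaDensity I g m = (S.ncard : ℝ) / ((E.ncard : ℝ) * (B.ncard : ℝ)) := rfl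
  have hdone : oaDensity I g m = 1 ↔ S = E ×ˢ B := by
    rw [hdensity, div_eq_one_iff_eq hden.ne']
    constructor
    · intro h
      have hcard : E.ncard * B.ncard ≤ S.ncard := by exact_mod_cast h.ge
      rw [← myncard_prod] at hcard
      exact Set.eq_of_subset_of_ncard_le hSsub hcard (Set.toFinite _)
    · intro h
      rw [h, myncard_prod]
      push_cast
      ring
  refine ⟨⟨div_nonneg (Nat.cast_nonneg _) hden.le, ?_⟩, ?_, ?_⟩
  · rw [hdensity, div_le_one hden]
    exact_mod_cast hcardle
  · rw [hdone]
    constructor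
    · rintro ⟨c, hce, hci⟩
      have hext : extentOf I B = E := by rw [← hci, c.extentOf_intent, hce]
      ext ⟨a, b⟩
      simp only [hS, Set.mem_setOf_eq, Set.mem_prod]
      refine ⟨fun h => ⟨h.2.1, h.2.2⟩, fun ⟨ha, hb⟩ => ⟨?_, ha, hb⟩⟩
      rw [← hext] at ha
      exact ha b hb
    · intro h
      have hall : ∀ a ∈ E, ∀ b ∈ B, I a b := by
        intro a ha b hb
        have : (a, b) ∈ S := h ▸ Set.mem_prod.2 ⟨ha, hb⟩
        exact this.1
      have h1 : intentOf I E = B := by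
        apply Set.Subset.antisymm
        · intro b hb
          rw [hB]
          intro x hx
          have hx' : x = g := hx
          subst hx'
          exact hb x hgE
        · intro b hb a ha
          exact hall a ha b hb
      have h2 : extentOf I B = E := by
        apply Set.Subset.antisymm
        · intro a ha
          rw [hE]
          intro x hx
          have hx' : x = m := hx
          subst hx'
          exact ha x hmB
        · intro a ha b hb
          exact hall a ha b hb
      exact ⟨⟨E, B, h1, h2⟩, rfl, rfl⟩
  · refine ⟨⟨extentOf I B, B, by rw [hB]; exact int_ext_int I {g}, rfl⟩,
      ⟨E, intentOf I E, rfl, by rw [hE]; exact ext_int_ext I {m}⟩, rfl, rfl, rfl, rfl, ?_⟩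
    intro a ha
    show a ∈ E
    intro x hx
    have hx' : x = m := hx
    subst hx'
    exact ha x hmB
end

section
/- Let (G,M,I) be a formal context. For each formal concept (A,B) of (G,M,I) with A ≠ ∅ and B ≠ ∅, there exists an OA-bicluster containing it: there is a pair (g,m) ∈ I such that A ⊆ m′ and B ⊆ g′. -/
/-- Every formal concept `(A,B)` with nonempty extent and intent is contained in some
OA-bicluster: there is a pair `(g,m) ∈ I` with `A ⊆ m′` and `B ⊆ g′`. -/
theorem concept_contained_in_oa_bicluster {G M : Type*} (I : G → M → Prop)
    (c : FormalConcept I) (hA : c.extent.Nonempty) (hB : c.intent.Nonempty) :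
    ∃ (g : G) (m : M), I g m ∧ c.extent ⊆ extentOf I {m} ∧ c.intent ⊆ intentOf I {g} := by
  obtain ⟨g, hg⟩ := hA
  obtain ⟨m, hm⟩ := hB
  have hgm : ∀ a ∈ c.extent, I a m := by
    rw [← c.intentOf_extent] at hm; exact hm
  have hgb : ∀ b ∈ c.intent, I g b := by
    rw [← c.extentOf_intent] at hg; exact hg
  exact ⟨g, m, hgm g hg, fun a ha m' hm' => hm' ▸ hgm a ha,
    fun b hb g' hg' => hg' ▸ hgb b hb⟩
end

section
/- (Optimality of formal concepts as factors.) Let I ∈ {0,1}^{n×m} and suppose I = P ∘ Q for binary matrices P ∈ {0,1}^{n×k} and Q ∈ {0,1}^{k×m}. Then there exists a set F of formal concepts of the context (X,Y,I) with |F| ≤ k such that, for the n×|F| and |F|×m binary matrices P_F and Q_F, one has I = P_F ∘ Q_F. -/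
/-
Every rectangle `A × B` of ones of a Boolean matrix lies inside a formal concept, namely the one
generated by `A`, and every formal concept is itself a rectangle of ones. A factorisation
`I = P ∘ Q` covers the ones of `I` by the `k` rectangles `{i | P i l} × {j | Q l j}`; replacing
each of them by the concept it generates still covers the ones of `I` and nothing else.
-/

open Classical

/-- Boolean matrix product: `(P ∘ Q)_{ij} = ⋁_l P_{il} · Q_{lj}`. -/
noncomputable def boolProd {n m : ℕ} {ι : Type*} [Fintype ι]
    (P : Fin n → ι → Bool) (Q : ι → Fin m → Bool) : Fin n → Fin m → Bool :=
  fun i j => decide (∃ l : ι, P i l = true ∧ Q l j = true)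

/-- The object-factor matrix `P_F`: `(P_F)_{il} = 1` iff `i ∈ A_l`. -/
noncomputable def PF {n : ℕ} {M : Type*} {ι : Type*} (I : Fin n → M → Prop)
    (F : ι → FormalConcept I) : Fin n → ι → Bool :=
  fun i l => decide (i ∈ (F l).extent)

/-- The factor-attribute matrix `Q_F`: `(Q_F)_{lj} = 1` iff `j ∈ B_l`. -/
noncomputable def QF {m : ℕ} {G : Type*} {ι : Type*} (I : G → Fin m → Prop)
    (F : ι → FormalConcept I) : ι → Fin m → Bool :=
  fun l j => decide (j ∈ (F l).intent)

section Concepts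

variable {G M : Type*} (I : G → M → Prop)

-- `intentOf I` and `extentOf I` are definitionally Mathlib's `upperPolar I` and `lowerPolar I`.
def conceptOf (A : Set G) : FormalConcept I where
  extent := extentOf I (intentOf I A)
  intent := intentOf I A
  intentOf_extent := upperPolar_lowerPolar_upperPolar I A
  extentOf_intent := rfl

variable {I}

theorem FormalConcept.rel_of_mem (c : FormalConcept I) {g : G} {m : M}
    (hg : g ∈ c.extent) (hm : m ∈ c.intent) : I g m := by
  rw [← c.extentOf_intent] at hg
  exact hg m hm

theorem subset_conceptOf_extent (A : Set G) : A ⊆ (conceptOf I A).extent :=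
  subset_lowerPolar_upperPolar I A

theorem subset_conceptOf_intent {A : Set G} {B : Set M} (h : ∀ g ∈ A, ∀ m ∈ B, I g m) :
    B ⊆ (conceptOf I A).intent :=
  fun m hm g hg => h g hg m hm

end Concepts

section BooleanProduct

variable {n m : ℕ} {ι : Type*} [Fintype ι]

theorem boolProd_eq_true_iff {P : Fin n → ι → Bool} {Q : ι → Fin m → Bool} {i : Fin n}
    {j : Fin m} : boolProd P Q i j = true ↔ ∃ l, P i l = true ∧ Q l j = true :=
  decide_eq_true_iff

theorem boolProd_PF_QF_eq_true_iff {I : Fin n → Fin m → Prop} (F : ι → FormalConcept I)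
    {i : Fin n} {j : Fin m} :
    boolProd (PF I F) (QF I F) i j = true ↔ ∃ l, i ∈ (F l).extent ∧ j ∈ (F l).intent := by
  simp [boolProd, PF, QF]

theorem boolProd_PF_QF_image_eq_true_iff {I : Fin n → Fin m → Prop} (F : ι → FormalConcept I)
    {i : Fin n} {j : Fin m} :
    boolProd (PF I (fun c : Finset.univ.image F => c.val))
        (QF I (fun c : Finset.univ.image F => c.val)) i j = true ↔
      ∃ l, i ∈ (F l).extent ∧ j ∈ (F l).intent := by
  simp [boolProd_PF_QF_eq_true_iff]

end BooleanProduct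

/-- Optimality of formal concepts as factors: if `I = P ∘ Q` for binary matrices
`P ∈ {0,1}^{n×k}` and `Q ∈ {0,1}^{k×m}`, then there is a set `F` of formal concepts of the
context of `I` with `|F| ≤ k` such that `I = P_F ∘ Q_F`. -/
theorem optimal_boolean_factorisation_by_concepts {n m k : ℕ} (I : Fin n → Fin m → Bool)
    (P : Fin n → Fin k → Bool) (Q : Fin k → Fin m → Bool)
    (h : ∀ (i : Fin n) (j : Fin m), I i j = boolProd P Q i j) :
    ∃ F : Finset (FormalConcept (fun (i : Fin n) (j : Fin m) => I i j = true)),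
      F.card ≤ k ∧
      ∀ (i : Fin n) (j : Fin m),
        I i j = boolProd (PF _ (fun c : F => c.val))
          (QF _ (fun c : F => c.val)) i j := by
  let J : Fin n → Fin m → Prop := fun i j => I i j = true
  let c : Fin k → FormalConcept J := fun l => conceptOf J {i | P i l = true}
  have factor_subset_ones : ∀ l, ∀ i ∈ {i | P i l = true}, ∀ j ∈ {j | Q l j = true}, J i j :=
    fun l i hi j hj => (h i j).trans (boolProd_eq_true_iff.2 ⟨l, hi, hj⟩)
  refine ⟨Finset.univ.image c, Finset.card_image_le.trans (by simp), fun i j => ?_⟩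
  rw [Bool.eq_iff_iff, boolProd_PF_QF_image_eq_true_iff]
  constructor
  · intro hij
    obtain ⟨l, hi, hj⟩ := boolProd_eq_true_iff.1 ((h i j).symm.trans hij)
    exact ⟨l, subset_conceptOf_extent _ hi, subset_conceptOf_intent (factor_subset_ones l) hj⟩
  · rintro ⟨l, hi, hj⟩
    exact (c l).rel_of_mem hi hj
end
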